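/- Let φ be a continuous flow on a compact metric space (X,d). Then there exists an at most countable collection {B_n} of strongly stable sets such that SCR_d(φ) = ⋂_n (B_n ∪ B_n•). -/

import Mathlib

open Set Metric Topology MeasureTheory

/-- A continuous flow on `X`: jointly continuous, `φ 0 = id`, group property. -/
def IsFlow {X : Type*} [TopologicalSpace X] (φ : ℝ → X → X) : Prop :=
  Continuous (fun p : X × ℝ => φ p.2 p.1) ∧ (∀ x, φ 0 x = x) ∧
    ∀ s t x, φ (s + t) x = φ s (φ t x)

/-- Forward invariance of a set under the flow. -/
def FwdInvariant {X : Type*} (φ : ℝ → X → X) (S : Set X) : Prop :=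
  ∀ t, 0 ≤ t → ∀ x ∈ S, φ t x ∈ S

/-- The omega-limit set of a point. -/
def omegaPt {X : Type*} [TopologicalSpace X] (φ : ℝ → X → X) (x : X) : Set X :=
  ⋂ T : ℝ, closure {y | ∃ t, T ≤ t ∧ φ t x = y}

/-- The omega-limit set of a set. -/
def omegaSet {X : Type*} [TopologicalSpace X] (φ : ℝ → X → X) (U : Set X) : Set X :=
  ⋂ T : ℝ, closure {y | ∃ t, T ≤ t ∧ ∃ u ∈ U, φ t u = y}

/-- The complementary set `B• = {x : ω(x) ∩ B = ∅}`. -/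
def bulletSet {X : Type*} [TopologicalSpace X] (φ : ℝ → X → X) (B : Set X) : Set X :=
  {x | omegaPt φ x ∩ B = ∅}

/-- A closed set is stable if it has a neighborhood base of forward invariant sets. -/
def IsStable {X : Type*} [TopologicalSpace X] (φ : ℝ → X → X) (B : Set X) : Prop :=
  IsClosed B ∧ ∀ N ∈ nhdsSet B, ∃ V ∈ nhdsSet B, FwdInvariant φ V ∧ V ⊆ N

/-- A strongly stable set, via a family of closed nested neighborhoods `U η`, `η ∈ (0,1)`,
and times `T η` bounded on compact subsets of `(0,1)`. -/
def StronglyStable {X : Type*} [MetricSpace X] (φ : ℝ → X → X) (B : Set X) : Prop :=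
  IsClosed B ∧ ∃ (U : ℝ → Set X) (T : ℝ → ℝ),
    (∀ η ∈ Ioo (0:ℝ) 1, IsClosed (U η) ∧ B ⊆ interior (U η)) ∧
    (∀ η lam, η ∈ Ioo (0:ℝ) 1 → lam ∈ Ioo (0:ℝ) 1 → η < lam → U η ⊆ U lam) ∧
    (∀ η lam, η ∈ Ioo (0:ℝ) 1 → lam ∈ Ioo (0:ℝ) 1 → η < lam →
      {x | infDist x (U η) < lam - η} ⊆ U lam) ∧
    (B = ⋂ η ∈ Ioo (0:ℝ) 1, omegaSet φ (U η)) ∧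
    (∀ η ∈ Ioo (0:ℝ) 1, 0 < T η) ∧
    (∀ K, K ⊆ Ioo (0:ℝ) 1 → IsCompact K → Bornology.IsBounded (T '' K)) ∧
    ∀ η ∈ Ioo (0:ℝ) 1, closure {y | ∃ t, T η ≤ t ∧ ∃ u ∈ U η, φ t u = y} ⊆ U η

/-- A strong `(ε,T)`-chain from `x` to `y`. -/
def StrongChain {X : Type*} [MetricSpace X] (φ : ℝ → X → X) (ε T : ℝ) (x y : X) : Prop :=
  ∃ (n : ℕ) (xs : ℕ → X) (ts : ℕ → ℝ), xs 0 = x ∧ xs (n + 1) = y ∧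
    (∀ i ≤ n, T ≤ ts i) ∧
    ∑ i ∈ Finset.range (n + 1), dist (φ (ts i) (xs i)) (xs (i + 1)) < ε

/-- The strong chain recurrent set. -/
def SCR {X : Type*} [MetricSpace X] (φ : ℝ → X → X) : Set X :=
  {x | ∀ ε > 0, ∀ T > 0, StrongChain φ ε T x x}

/-- `Ω(Y,ε,T)`: points reachable from `Y` by a strong `(ε,T)`-chain. -/
def OmegaChain {X : Type*} [MetricSpace X] (φ : ℝ → X → X) (Y : Set X) (ε T : ℝ) : Set X :=
  {y | ∃ x ∈ Y, StrongChain φ ε T x y}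

/-- `Ω̄(Y,ε,T) = ⋂_{η>0} Ω(Y,ε+η,T)`. -/
def OmegaBar {X : Type*} [MetricSpace X] (φ : ℝ → X → X) (Y : Set X) (ε T : ℝ) : Set X :=
  ⋂ η ∈ Ioi (0:ℝ), OmegaChain φ Y (ε + η) T

/-!
If `x` is not strongly chain recurrent, there are `ε, T > 0` with no strong `(ε, T)`-chain from
`x` to itself. From `(x, ε, T)` one builds a strongly stable set `B`: with `U η` the set of points
reachable by strong `(ε/2 + η, T)`-chains from the orbit segment `φ_[T, 2T] x`, `B` is the
intersection of the ω-limit sets `ω(U η)`, and the `U η` themselves witness strong stability.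
A strongly chain recurrent point whose ω-limit set meets `B` can be chained back to itself from
inside `U η`, so it lies in `ω(U η)`; hence `SCR ⊆ B ∪ B•`. On the other hand `x ∉ cl(B ∪ B•)`:
a point of `B` close to `x` would close up a strong `(ε, T)`-chain at `x`, and every point close
to `x` enters all `U η` after time `2T`, so its (nonempty) ω-limit set lies in `B`. Since `X` is
second countable, countably many of these sets `B` already exclude every non-recurrent point.
-/
namespace StrongChain

variable {X : Type*} [MetricSpace X] {φ : ℝ → X → X} {ε ε' T : ℝ} {x y z : X}

theorem mono (h : StrongChain φ ε T x y) (hε : ε ≤ ε') : StrongChain φ ε' T x y := by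
  obtain ⟨n, xs, ts, hx0, hxn, hts, hsum⟩ := h
  exact ⟨n, xs, ts, hx0, hxn, hts, hsum.trans_le hε⟩

theorem single {t : ℝ} (ht : T ≤ t) (h : dist (φ t x) y < ε) : StrongChain φ ε T x y :=
  ⟨0, fun k => if k = 0 then x else y, fun _ => t, rfl, rfl, fun _ _ => ht, by simpa using h⟩

theorem trans (h₁ : StrongChain φ ε T x y) (h₂ : StrongChain φ ε' T y z) :
    StrongChain φ (ε + ε') T x z := by
  obtain ⟨m, xs, ts, hx0, hxm, hts, hsum₁⟩ := h₁
  obtain ⟨n, ys, ss, hy0, hyn, hss, hsum₂⟩ := h₂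
  set zs : ℕ → X := fun k => if k ≤ m then xs k else ys (k - (m + 1))
  set rs : ℕ → ℝ := fun k => if k ≤ m then ts k else ss (k - (m + 1))
  have hfirst : ∀ i ∈ Finset.range (m + 1), dist (φ (rs i) (zs i)) (zs (i + 1)) =
      dist (φ (ts i) (xs i)) (xs (i + 1)) := by
    intro i hi
    have hi : i ≤ m := Nat.lt_succ_iff.1 (Finset.mem_range.1 hi)
    simp only [zs, rs, if_pos hi]
    split_ifs with h
    · rfl
    · rw [show i = m by omega, Nat.sub_self, hy0, hxm]
  have hsecond : ∀ j ∈ Finset.range (n + 1),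
      dist (φ (rs (m + 1 + j)) (zs (m + 1 + j))) (zs (m + 1 + j + 1)) =
        dist (φ (ss j) (ys j)) (ys (j + 1)) := by
    intro j _
    simp only [zs, rs, if_neg (show ¬m + 1 + j ≤ m by omega),
      if_neg (show ¬m + 1 + j + 1 ≤ m by omega), Nat.add_sub_cancel_left,
      show m + 1 + j + 1 - (m + 1) = j + 1 by omega]
  refine ⟨m + 1 + n, zs, rs, by simp [zs, hx0], ?_, ?_, ?_⟩
  · simp only [zs, if_neg (show ¬m + 1 + n + 1 ≤ m by omega),
      show m + 1 + n + 1 - (m + 1) = n + 1 by omega, hyn]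
  · intro i _
    simp only [rs]
    split_ifs with h
    exacts [hts i h, hss _ (by omega)]
  · rw [show m + 1 + n + 1 = m + 1 + (n + 1) by omega, Finset.sum_range_add,
      Finset.sum_congr rfl hfirst, Finset.sum_congr rfl hsecond]
    exact add_lt_add hsum₁ hsum₂

theorem redirect (h : StrongChain φ ε T x y) (y' : X) :
    StrongChain φ (ε + dist y y') T x y' := by
  obtain ⟨n, xs, ts, hx0, hxn, hts, hsum⟩ := h
  have hinit : ∀ i ∈ Finset.range n,
      dist (φ (ts i) (Function.update xs (n + 1) y' i)) (Function.update xs (n + 1) y' (i + 1)) =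
        dist (φ (ts i) (xs i)) (xs (i + 1)) := by
    intro i hi
    have := Finset.mem_range.1 hi
    rw [Function.update_of_ne (by omega), Function.update_of_ne (by omega)]
  refine ⟨n, Function.update xs (n + 1) y', ts, ?_, by simp, hts, ?_⟩
  · rwa [Function.update_of_ne (by omega)]
  · rw [Finset.sum_range_succ] at hsum ⊢
    rw [Finset.sum_congr rfl hinit, Function.update_of_ne (by omega), Function.update_self]
    subst hxn
    linarith [dist_triangle (φ (ts n) (xs n)) (xs (n + 1)) y']

variable (hφ : IsFlow φ)
include hφ

theorem flow_start {a : ℝ} (ha : 0 ≤ a) (h : StrongChain φ ε (T + a) x y) :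
    StrongChain φ ε T (φ a x) y := by
  obtain ⟨n, xs, ts, rfl, hxn, hts, hsum⟩ := h
  have htail : ∀ i ∈ Finset.range n,
      dist (φ (Function.update ts 0 (ts 0 - a) (i + 1))
        (Function.update xs 0 (φ a (xs 0)) (i + 1)))
        (Function.update xs 0 (φ a (xs 0)) (i + 1 + 1)) =
      dist (φ (ts (i + 1)) (xs (i + 1))) (xs (i + 1 + 1)) := by
    intro i _
    simp only [Function.update_of_ne (Nat.succ_ne_zero _)]
  refine ⟨n, Function.update xs 0 (φ a (xs 0)), Function.update ts 0 (ts 0 - a),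
    Function.update_self .., ?_, ?_, ?_⟩
  · rwa [Function.update_of_ne (Nat.succ_ne_zero _)]
  · intro i hi
    rcases i with _ | i
    · rw [Function.update_self]
      linarith [hts 0 (Nat.zero_le _)]
    · rw [Function.update_of_ne (Nat.succ_ne_zero _)]
      linarith [hts (i + 1) hi]
  · rw [Finset.sum_range_succ'] at hsum ⊢
    rwa [Finset.sum_congr rfl htail, Function.update_self, Function.update_self, ← hφ.2.2,
      sub_add_cancel, zero_add, Function.update_of_ne one_ne_zero]

theorem exists_stop_short {b : ℝ} (hb : 0 ≤ b) (h : StrongChain φ ε (T + b) x y) :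
    ∃ z, StrongChain φ ε T x z ∧ dist (φ b z) y < ε := by
  obtain ⟨n, xs, ts, hx0, rfl, hts, hsum⟩ := h
  have hinit : ∀ i ∈ Finset.range n,
      dist (φ (Function.update ts n (ts n - b) i)
        (Function.update xs (n + 1) (φ (ts n - b) (xs n)) i))
        (Function.update xs (n + 1) (φ (ts n - b) (xs n)) (i + 1)) =
      dist (φ (ts i) (xs i)) (xs (i + 1)) := by
    intro i hi
    have := Finset.mem_range.1 hi
    rw [Function.update_of_ne (show i ≠ n by omega), Function.update_of_ne (show i ≠ n + 1 by omega),
      Function.update_of_ne (show i + 1 ≠ n + 1 by omega)]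
  rw [Finset.sum_range_succ] at hsum
  refine ⟨φ (ts n - b) (xs n), ⟨n, Function.update xs (n + 1) (φ (ts n - b) (xs n)),
    Function.update ts n (ts n - b), ?_, Function.update_self .., ?_, ?_⟩, ?_⟩
  · rwa [Function.update_of_ne (Nat.succ_ne_zero n).symm]
  · intro i hi
    by_cases hin : i = n
    · subst hin
      rw [Function.update_self]
      linarith [hts i hi]
    · rw [Function.update_of_ne hin]
      linarith [hts i hi]
  · rw [Finset.sum_range_succ, Finset.sum_congr rfl hinit, Function.update_self,
      Function.update_of_ne (show n ≠ n + 1 by omega), Function.update_self, dist_self, add_zero]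
    linarith [dist_nonneg (x := φ (ts n) (xs n)) (y := xs (n + 1))]
  · rw [← hφ.2.2, add_sub_cancel]
    linarith [Finset.sum_nonneg (fun i (_ : i ∈ Finset.range n) =>
      dist_nonneg (x := φ (ts i) (xs i)) (y := xs (i + 1)))]

end StrongChain

section OmegaLimits

variable {X : Type*}

theorem omegaPt_nonempty [TopologicalSpace X] [CompactSpace X] (φ : ℝ → X → X) (x : X) :
    (omegaPt φ x).Nonempty := by
  refine IsCompact.nonempty_iInter_of_directed_nonempty_isCompact_isClosed _ ?_
    (fun S => ⟨φ S x, subset_closure ⟨S, le_rfl, rfl⟩⟩)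
    (fun _ => isClosed_closure.isCompact) (fun _ => isClosed_closure)
  intro a b
  refine ⟨max a b, closure_mono ?_, closure_mono ?_⟩ <;>
    exact fun _ ⟨t, ht, hy⟩ => ⟨t, le_trans (by simp) ht, hy⟩

theorem omegaPt_subset_omegaSet [TopologicalSpace X] {φ : ℝ → X → X} (hφ : IsFlow φ) {S : ℝ}
    {x : X} {V : Set X} (h : ∀ t, S ≤ t → φ t x ∈ V) : omegaPt φ x ⊆ omegaSet φ V := by
  refine fun p hp => mem_iInter.2 fun T' => closure_mono ?_ (mem_iInter.1 hp (S + T'))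
  rintro _ ⟨s, hs, rfl⟩
  exact ⟨s - S, by linarith, φ S x, h S le_rfl, by rw [← hφ.2.2, sub_add_cancel]⟩

variable [MetricSpace X] {φ : ℝ → X → X}

theorem exists_dist_lt_of_mem_omegaPt {x p : X} (hp : p ∈ omegaPt φ x) {δ : ℝ} (hδ : 0 < δ) :
    ∃ s, 0 ≤ s ∧ dist (φ s x) p < δ := by
  obtain ⟨_, ⟨s, hs, rfl⟩, hd⟩ := Metric.mem_closure_iff.1 (mem_iInter.1 hp 0) δ hδ
  exact ⟨s, hs, by rwa [dist_comm]⟩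

theorem mem_omegaSet_of_forall {V : Set X} {x : X}
    (h : ∀ T' θ : ℝ, 0 < θ → ∃ t, T' ≤ t ∧ ∃ u ∈ V, dist (φ t u) x < θ) :
    x ∈ omegaSet φ V := by
  refine mem_iInter.2 fun T' => Metric.mem_closure_iff.2 fun θ hθ => ?_
  obtain ⟨t, ht, u, hu, hd⟩ := h T' θ hθ
  exact ⟨_, ⟨t, ht, u, hu, rfl⟩, by rwa [dist_comm]⟩

end OmegaLimits

section OmegaBar

variable {X : Type*} [MetricSpace X] {φ : ℝ → X → X} {Y : Set X} {r r' δ T : ℝ} {u w : X}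

theorem mem_omegaBar_iff : w ∈ OmegaBar φ Y r T ↔ ∀ η > 0, w ∈ OmegaChain φ Y (r + η) T := by
  simp [OmegaBar]

theorem omegaChain_mono (h : r ≤ r') : OmegaChain φ Y r T ⊆ OmegaChain φ Y r' T :=
  fun _ ⟨x, hx, hc⟩ => ⟨x, hx, hc.mono h⟩

theorem omegaBar_mono (h : r ≤ r') : OmegaBar φ Y r T ⊆ OmegaBar φ Y r' T := fun _ hw =>
  mem_omegaBar_iff.2 fun η hη => omegaChain_mono (by linarith) (mem_omegaBar_iff.1 hw η hη)

theorem mem_omegaBar_of_forall (h : ∀ η ∈ Ioo (0 : ℝ) 1, w ∈ OmegaBar φ Y (r + η) T) :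
    w ∈ OmegaBar φ Y r T := by
  refine mem_omegaBar_iff.2 fun η hη => ?_
  have hδ : min (η / 2) (1 / 2) ∈ Ioo (0 : ℝ) 1 :=
    ⟨lt_min (by linarith) (by norm_num), (min_le_right _ _).trans_lt (by norm_num)⟩
  refine omegaChain_mono ?_ (mem_omegaBar_iff.1 (h _ hδ) _ hδ.1)
  linarith [min_le_left (η / 2) (1 / 2)]

theorem mem_omegaBar_of_strongChain (hu : u ∈ OmegaBar φ Y r T) (h : StrongChain φ δ T u w) :
    w ∈ OmegaBar φ Y (r + δ) T := by
  refine mem_omegaBar_iff.2 fun η hη => ?_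
  obtain ⟨x, hx, hc⟩ := mem_omegaBar_iff.1 hu η hη
  exact ⟨x, hx, (hc.trans h).mono (by linarith)⟩

theorem mem_omegaBar_of_dist_le (hu : u ∈ OmegaBar φ Y r T) (h : dist u w ≤ δ) :
    w ∈ OmegaBar φ Y (r + δ) T := by
  refine mem_omegaBar_iff.2 fun η hη => ?_
  obtain ⟨x, hx, hc⟩ := mem_omegaBar_iff.1 hu η hη
  exact ⟨x, hx, (hc.redirect w).mono (by linarith)⟩

theorem flow_mem_omegaBar {s : ℝ} (hs : T ≤ s) (hu : u ∈ OmegaBar φ Y r T) :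
    φ s u ∈ OmegaBar φ Y r T :=
  mem_omegaBar_of_forall fun η hη =>
    mem_omegaBar_of_strongChain hu (StrongChain.single hs (by simpa using hη.1))

theorem isClosed_omegaBar : IsClosed (OmegaBar φ Y r T) := by
  refine isClosed_of_closure_subset fun w hw => mem_omegaBar_of_forall fun η hη => ?_
  obtain ⟨u, hu, hd⟩ := Metric.mem_closure_iff.1 hw η hη.1
  exact mem_omegaBar_of_dist_le hu (dist_comm w u ▸ hd.le)

theorem closure_flow_omegaBar_subset :
    closure {y | ∃ t, T ≤ t ∧ ∃ u ∈ OmegaBar φ Y r T, φ t u = y} ⊆ OmegaBar φ Y r T :=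
  closure_minimal (fun _ ⟨_, ht, _, hu, hy⟩ => hy ▸ flow_mem_omegaBar ht hu) isClosed_omegaBar

theorem omegaSet_omegaBar_subset : omegaSet φ (OmegaBar φ Y r T) ⊆ OmegaBar φ Y r T :=
  (iInter_subset _ T).trans closure_flow_omegaBar_subset

end OmegaBar

section ChainAttractor

variable {X : Type*} [MetricSpace X] (φ : ℝ → X → X) (y : X) (ε T : ℝ)

def orbitSegment : Set X := (fun s => φ s y) '' Icc T (2 * T)

def chainNbhd (η : ℝ) : Set X := OmegaBar φ (orbitSegment φ y T) (ε / 2 + η) T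

def chainAttractor : Set X := ⋂ η ∈ Ioo (0 : ℝ) 1, omegaSet φ (chainNbhd φ y ε T η)

variable {φ y ε T}

theorem chainNbhd_mono {a b : ℝ} (h : a ≤ b) : chainNbhd φ y ε T a ⊆ chainNbhd φ y ε T b :=
  omegaBar_mono (by linarith)

theorem mem_chainNbhd_of_dist_le {a δ : ℝ} {w z : X} (hw : w ∈ chainNbhd φ y ε T a)
    (h : dist w z ≤ δ) : z ∈ chainNbhd φ y ε T (a + δ) := by
  rw [chainNbhd, ← add_assoc]
  exact mem_omegaBar_of_dist_le hw h

theorem mem_chainNbhd_of_strongChain {a δ : ℝ} {w z : X} (hw : w ∈ chainNbhd φ y ε T a)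
    (h : StrongChain φ δ T w z) : z ∈ chainNbhd φ y ε T (a + δ) := by
  rw [chainNbhd, ← add_assoc]
  exact mem_omegaBar_of_strongChain hw h

theorem mem_chainNbhd_of_dist_lt (hφ : IsFlow φ) (hT : 0 ≤ T) {η : ℝ} (hη : 0 ≤ η) {z : X}
    (hz : dist (φ (2 * T) y) z < ε / 2) : z ∈ chainNbhd φ y ε T η := by
  refine mem_omegaBar_iff.2 fun θ hθ =>
    ⟨φ T y, ⟨T, ⟨le_rfl, by linarith⟩, rfl⟩, StrongChain.single le_rfl ?_⟩
  rw [← hφ.2.2, ← two_mul]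
  linarith

theorem chainAttractor_subset_chainNbhd_zero :
    chainAttractor φ y ε T ⊆ chainNbhd φ y ε T 0 := fun _ hz =>
  mem_omegaBar_of_forall fun η hη => by
    simpa [chainNbhd] using omegaSet_omegaBar_subset (mem_iInter₂.1 hz η hη)

theorem stronglyStable_chainAttractor (hφ : IsFlow φ) (hε : 0 < ε) (hT : 0 < T) :
    StronglyStable φ (chainAttractor φ y ε T) := by
  have hne : ∀ η ∈ Ioo (0 : ℝ) 1, (chainNbhd φ y ε T η).Nonempty := fun η hη =>
    ⟨φ (2 * T) y, mem_chainNbhd_of_dist_lt hφ hT.le hη.1.le (by simpa using half_pos hε)⟩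
  refine ⟨isClosed_biInter fun η _ => isClosed_iInter fun _ => isClosed_closure,
    chainNbhd φ y ε T, fun _ => T, fun η hη => ⟨isClosed_omegaBar, ?_⟩,
    fun η lam _ _ h => chainNbhd_mono h.le, ?_, rfl, fun _ _ => hT, ?_,
    fun η _ => closure_flow_omegaBar_subset⟩
  · intro z hz
    refine mem_interior.2 ⟨ball z η, fun w hw => ?_, isOpen_ball, mem_ball_self hη.1⟩
    simpa using mem_chainNbhd_of_dist_le (chainAttractor_subset_chainNbhd_zero hz)
      (mem_ball'.1 hw).le
  · intro η lam hη _ _ z hz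
    obtain ⟨w, hw, hd⟩ := (infDist_lt_iff (hne η hη)).1 hz
    have := mem_chainNbhd_of_dist_le hw (dist_comm z w ▸ hd.le)
    rwa [add_sub_cancel] at this
  · exact fun K _ _ => (Bornology.isBounded_singleton (x := T)).subset
      (image_subset_iff.2 fun _ _ => rfl)

theorem scr_subset_chainAttractor_union (hφ : IsFlow φ) (hT : 0 < T) :
    SCR φ ⊆ chainAttractor φ y ε T ∪ bulletSet φ (chainAttractor φ y ε T) := by
  intro x hx
  by_cases hb : omegaPt φ x ∩ chainAttractor φ y ε T = ∅
  · exact Or.inr hb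
  obtain ⟨p, hpx, hpB⟩ := nonempty_iff_ne_empty.2 hb
  refine Or.inl (mem_iInter₂.2 fun η hη => mem_omegaSet_of_forall fun T' θ hθ => ?_)
  obtain ⟨s, hs, hsp⟩ := exists_dist_lt_of_mem_omegaPt hpx (half_pos hη.1)
  have hsU : φ s x ∈ chainNbhd φ y ε T (η / 2) := by
    simpa using mem_chainNbhd_of_dist_le (chainAttractor_subset_chainNbhd_zero hpB)
      (dist_comm p _ ▸ hsp.le)
  have hε' : 0 < min θ (η / 2) := lt_min hθ (half_pos hη.1)
  have hT₀ : 0 < T + max T' 0 + s := by linarith [le_max_right T' 0]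
  -- a closed chain through `x`, cut so that it starts at `φ s x` and ends `max T' 0` before `x`
  obtain ⟨z, hcz, hbz⟩ := ((hx _ hε' _ hT₀).flow_start hφ hs).exists_stop_short hφ
    (le_max_right T' 0)
  refine ⟨max T' 0, le_max_left _ _, z, chainNbhd_mono ?_ (mem_chainNbhd_of_strongChain hsU hcz),
    hbz.trans_le (min_le_left _ _)⟩
  linarith [min_le_right θ (η / 2)]

theorem strongChain_of_mem_omegaBar_orbitSegment {r : ℝ} {z : X}
    (hz : z ∈ OmegaBar φ (orbitSegment φ y T) r T) (hr : r < ε) : StrongChain φ ε T y z := by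
  obtain ⟨_, ⟨s, hs, rfl⟩, hc⟩ := mem_omegaBar_iff.1 hz ((ε - r) / 2) (by linarith)
  refine ((StrongChain.single (ε := (ε - r) / 2) hs.1 ?_).trans hc).mono (le_of_eq (by ring))
  rw [dist_self]
  linarith

theorem eventually_notMem_chainAttractor (hε : 0 < ε) (hy : ¬StrongChain φ ε T y y) :
    ∀ᶠ z in 𝓝 y, z ∉ chainAttractor φ y ε T := by
  refine Metric.eventually_nhds_iff.2 ⟨ε / 2, half_pos hε, fun z hzy hzB => hy ?_⟩
  refine strongChain_of_mem_omegaBar_orbitSegment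
    (mem_chainNbhd_of_dist_le (chainAttractor_subset_chainNbhd_zero hzB) le_rfl) ?_
  linarith

theorem eventually_notMem_bulletSet_chainAttractor [CompactSpace X] (hφ : IsFlow φ)
    (hε : 0 < ε) (hT : 0 < T) : ∀ᶠ z in 𝓝 y, z ∉ bulletSet φ (chainAttractor φ y ε T) := by
  have hcont : Continuous (φ (2 * T)) := hφ.1.comp (continuous_id.prodMk continuous_const)
  filter_upwards [hcont.continuousAt.eventually (ball_mem_nhds _ (half_pos hε))]
    with z hz hbullet
  have hU : ∀ η ∈ Ioo (0 : ℝ) 1, ∀ t, 3 * T ≤ t → φ t z ∈ chainNbhd φ y ε T η := by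
    intro η hη t ht
    have := flow_mem_omegaBar (show T ≤ t - 2 * T by linarith)
      (mem_chainNbhd_of_dist_lt hφ hT.le hη.1.le (mem_ball'.1 hz))
    rwa [← hφ.2.2, sub_add_cancel] at this
  obtain ⟨p, hp⟩ := omegaPt_nonempty φ z
  exact eq_empty_iff_forall_notMem.1 hbullet p
    ⟨hp, mem_iInter₂.2 fun η hη => omegaPt_subset_omegaSet hφ (hU η hη) hp⟩

theorem notMem_closure_chainAttractor_union [CompactSpace X] (hφ : IsFlow φ) (hε : 0 < ε)
    (hT : 0 < T) (hy : ¬StrongChain φ ε T y y) :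
    y ∉ closure (chainAttractor φ y ε T ∪ bulletSet φ (chainAttractor φ y ε T)) := by
  rw [← mem_compl_iff, ← interior_compl, mem_interior_iff_mem_nhds]
  filter_upwards [eventually_notMem_chainAttractor hε hy,
    eventually_notMem_bulletSet_chainAttractor hφ hε hT] with z hB hbullet
  exact fun h => h.elim hB hbullet

end ChainAttractor

theorem exists_countable_subset_biInter_eq {X ι : Type*} [TopologicalSpace X]
    [SecondCountableTopology X] {A : Set X} (I : Set ι) (f : ι → Set X)
    (hA : ∀ i ∈ I, A ⊆ f i) (hsep : ∀ x ∉ A, ∃ i ∈ I, x ∉ closure (f i)) :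
    ∃ J ⊆ I, J.Countable ∧ A = ⋂ i ∈ J, f i := by
  obtain ⟨J, hJI, hJc, hJ⟩ := TopologicalSpace.isOpen_biUnion_countable I
    (fun i => (closure (f i))ᶜ) fun _ _ => isClosed_closure.isOpen_compl
  refine ⟨J, hJI, hJc, (subset_iInter₂ fun i hi => hA i (hJI hi)).antisymm fun x hx => ?_⟩
  by_contra hxA
  obtain ⟨i, hi, hxi⟩ := hsep x hxA
  obtain ⟨j, hj, hxj⟩ := mem_iUnion₂.1 (hJ ▸ mem_biUnion hi hxi : x ∈ ⋃ j ∈ J, (closure (f j))ᶜ)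
  exact hxj (subset_closure (mem_iInter₂.1 hx j hj))

theorem stmt14 {X : Type*} [MetricSpace X] [CompactSpace X] (φ : ℝ → X → X)
    (hφ : IsFlow φ) :
    ∃ 𝒮 : Set (Set X), 𝒮.Countable ∧ (∀ B ∈ 𝒮, StronglyStable φ B) ∧
      SCR φ = ⋂ B ∈ 𝒮, (B ∪ bulletSet φ B) := by
  set I : Set (Set X) := {B | ∃ y ε T, 0 < ε ∧ 0 < T ∧ B = chainAttractor φ y ε T}
  have hsub : ∀ B ∈ I, SCR φ ⊆ B ∪ bulletSet φ B := by
    rintro _ ⟨y, ε, T, -, hT, rfl⟩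
    exact scr_subset_chainAttractor_union hφ hT
  have hsep : ∀ x ∉ SCR φ, ∃ B ∈ I, x ∉ closure (B ∪ bulletSet φ B) := by
    intro x hx
    obtain ⟨ε, hε, T, hT, hxx⟩ : ∃ ε > 0, ∃ T > 0, ¬StrongChain φ ε T x x := by
      simpa [SCR] using hx
    exact ⟨_, ⟨x, ε, T, hε, hT, rfl⟩, notMem_closure_chainAttractor_union hφ hε hT hxx⟩
  obtain ⟨𝒮, h𝒮I, h𝒮c, hSCR⟩ := exists_countable_subset_biInter_eq I _ hsub hsep
  refine ⟨𝒮, h𝒮c, fun B hB => ?_, hSCR⟩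
  obtain ⟨y, ε, T, hε, hT, rfl⟩ := h𝒮I hB
  exact stronglyStable_chainAttractor hφ hε hT
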